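/- Let N : ℕ and ρ : Fin N → ℂ with ρ ≠ 0 and ξ(ρ) < 1. Then P_h is Fréchet differentiable over ℝ at ρ, and its derivative L is self-adjoint with respect to the real inner product: Re⟪L(u), v⟫ = Re⟪L(v), u⟫ for all u, v : Fin N → ℂ. (Toy-model form of Proposition 3, item 1: for f = h the full Jacobian matrix ((Π,π),(π̄,Π̄)) is Hermitian, i.e. the holomorphic block is Hermitian and the antiholomorphic block is symmetric, which is equivalent to symmetry of the real bilinear form (u,v) ↦ Re⟪L(u), v⟫.) -/

import Mathlib

noncomputable section

open scoped BigOperators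

namespace PureSpinorToy

variable {N : ℕ}

/-- Complex bilinear pairing `B(ρ,σ) = ∑ I, ρ_I σ_I`. -/
def B (ρ σ : Fin N → ℂ) : ℂ := ∑ I, ρ I * σ I

/-- Hermitian inner product `⟪ρ,σ⟫ = ∑ I, conj(ρ_I) σ_I`. -/
def hInner (ρ σ : Fin N → ℂ) : ℂ := ∑ I, (starRingEnd ℂ) (ρ I) * σ I

/-- Norm square `‖ρ‖² = ⟪ρ,ρ⟫` (a nonnegative real). -/
def nsq (ρ : Fin N → ℂ) : ℝ := (hInner ρ ρ).re

/-- Componentwise complex conjugation `ρ̄`. -/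
def conjFun (ρ : Fin N → ℂ) : Fin N → ℂ := fun I => (starRingEnd ℂ) (ρ I)

/-- `ζ(ρ) = B(ρ,ρ)/‖ρ‖²`. -/
def zeta (ρ : Fin N → ℂ) : ℂ := B ρ ρ / (nsq ρ : ℂ)

/-- `ξ(ρ) = |ζ(ρ)|²`. -/
def xi (ρ : Fin N → ℂ) : ℝ := Complex.normSq (zeta ρ)

/-- The family of projection maps
`P_f(ρ) = f(ξ(ρ)) • (ρ − (ζ(ρ)/(1+√(1−ξ(ρ)))) • ρ̄)`. -/
def P (f : ℝ → ℂ) (ρ : Fin N → ℂ) : Fin N → ℂ :=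
  f (xi ρ) • (ρ - (zeta ρ / (1 + (Real.sqrt (1 - xi ρ) : ℂ))) • conjFun ρ)

/-- The special function `h(t) = (1+√(1−t))/(2√(1−t))`. -/
def h (t : ℝ) : ℂ := (((1 + Real.sqrt (1 - t)) / (2 * Real.sqrt (1 - t)) : ℝ) : ℂ)

/-- The potential `Φ(ρ) = (‖ρ‖²/2)(1+√(1−ξ(ρ)))`. -/
def Phi (ρ : Fin N → ℂ) : ℝ := (nsq ρ / 2) * (1 + Real.sqrt (1 - xi ρ))

/-!
With `n = ‖ρ‖²` and the discriminant `D = n² − |B(ρ,ρ)|² = n²(1 − ξ)`, which is positive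
exactly when `ρ ≠ 0` and `ξ < 1`, the potential and the projection take the closed forms
`Φ = (n + √D)/2` and `P_h(ρ) = ((n + √D)ρ − B(ρ,ρ)ρ̄)/(2√D)`. Differentiating the first gives
`DΦ(ρ)u = 2 Re⟪P_h(ρ), u⟫`: `P_h` is half the gradient of `Φ` for the real inner product, so its
derivative is half the Hessian of `Φ`, which is symmetric.
-/

open scoped Topology ComplexConjugate

theorem bilin_fderiv_symm_of_gradient {E F : Type*} [NormedAddCommGroup E] [NormedSpace ℝ E]
    [NormedAddCommGroup F] [NormedSpace ℝ F] {b : F →L[ℝ] E →L[ℝ] ℝ} {Φ : E → ℝ} {G : E → F}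
    {x : E} (hΦ : ∀ᶠ y in 𝓝 x, HasFDerivAt Φ (b (G y)) y) (hG : DifferentiableAt ℝ G x)
    (u v : E) : b (fderiv ℝ G x u) v = b (fderiv ℝ G x v) u :=
  second_derivative_symmetric_of_eventually hΦ (b.hasFDerivAt.comp x hG.hasFDerivAt) u v

lemma hInner_smul_left (a : ℂ) (w u : Fin N → ℂ) : hInner (a • w) u = conj a * hInner w u := by
  simp [hInner, Finset.mul_sum, mul_assoc]

lemma hInner_sub_left (w w' u : Fin N → ℂ) :
    hInner (w - w') u = hInner w u - hInner w' u := by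
  simp [hInner, sub_mul, Finset.sum_sub_distrib]

lemma hInner_conjFun_left (σ u : Fin N → ℂ) : hInner (conjFun σ) u = B σ u := by
  simp [hInner, conjFun, B]

lemma conj_hInner (w u : Fin N → ℂ) : conj (hInner w u) = hInner u w := by
  simp [hInner, map_sum, mul_comm]

lemma re_hInner_comm (w u : Fin N → ℂ) : (hInner w u).re = (hInner u w).re := by
  rw [← conj_hInner, Complex.conj_re]

lemma B_comm (σ u : Fin N → ℂ) : B σ u = B u σ := by
  simp [B, mul_comm]

lemma nsq_eq_sum (σ : Fin N → ℂ) : nsq σ = ∑ I, ‖σ I‖ ^ 2 := by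
  simp [nsq, hInner, Complex.re_sum, Complex.mul_re, Complex.sq_norm, Complex.normSq_apply]

lemma nsq_pos {ρ : Fin N → ℂ} (hρ : ρ ≠ 0) : 0 < nsq ρ := by
  obtain ⟨I, hI⟩ := Function.ne_iff.1 hρ
  rw [nsq_eq_sum]
  exact Finset.sum_pos' (fun _ _ => by positivity) ⟨I, Finset.mem_univ I, by positivity⟩

lemma isBilinearMap_hInner : IsBilinearMap ℝ (hInner (N := N)) where
  add_left _ _ _ := by simp [hInner, add_mul, Finset.sum_add_distrib]
  smul_left c w u := by simpa [Complex.real_smul] using hInner_smul_left (c : ℂ) w u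
  add_right _ _ _ := by simp [hInner, mul_add, Finset.sum_add_distrib]
  smul_right _ _ _ := by simp [hInner, Finset.smul_sum, Complex.real_smul, mul_left_comm]

def hInnerL : (Fin N → ℂ) →L[ℝ] (Fin N → ℂ) →L[ℝ] ℂ :=
  isBilinearMap_hInner.toContinuousBilinearMap

def reInnerL : (Fin N → ℂ) →L[ℝ] (Fin N → ℂ) →L[ℝ] ℝ :=
  (ContinuousLinearMap.compL ℝ (Fin N → ℂ) ℂ ℝ Complex.reCLM).comp hInnerL

@[simp] lemma hInnerL_apply (w u : Fin N → ℂ) : hInnerL w u = hInner w u := rfl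

@[simp] lemma reInnerL_apply (w u : Fin N → ℂ) : reInnerL w u = (hInner w u).re := rfl

def conjL : (Fin N → ℂ) →L[ℝ] (Fin N → ℂ) :=
  ContinuousLinearMap.pi fun I => Complex.conjCLE.toContinuousLinearMap.comp (.proj I)

@[simp] lemma conjL_apply (σ : Fin N → ℂ) : conjL σ = conjFun σ := rfl

lemma hasFDerivAt_nsq (σ : Fin N → ℂ) : HasFDerivAt nsq ((2 : ℝ) • reInnerL σ) σ := by
  refine (reInnerL.hasFDerivAt_of_bilinear (hasFDerivAt_id σ) (hasFDerivAt_id σ)).congr_fderiv ?_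
  ext u
  simp [re_hInner_comm u σ, two_mul]

lemma hasFDerivAt_B_self (σ : Fin N → ℂ) :
    HasFDerivAt (fun τ => B τ τ) ((2 : ℝ) • hInnerL (conjFun σ)) σ := by
  have := hInnerL.hasFDerivAt_of_bilinear (conjL.hasFDerivAt (x := σ)) (hasFDerivAt_id σ)
  simp only [conjL_apply, hInnerL_apply, id, hInner_conjFun_left] at this
  refine this.congr_fderiv ?_
  ext u
  simp [hInner_conjFun_left, B_comm _ σ, two_smul]

def disc (σ : Fin N → ℂ) : ℝ := nsq σ ^ 2 - ‖B σ σ‖ ^ 2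

lemma nsq_nonneg (σ : Fin N → ℂ) : 0 ≤ nsq σ := by
  rw [nsq_eq_sum]; positivity

lemma disc_le_nsq_sq (σ : Fin N → ℂ) : disc σ ≤ nsq σ ^ 2 :=
  sub_le_self _ (by positivity)

lemma nsq_pos_of_disc_pos {σ : Fin N → ℂ} (hD : 0 < disc σ) : 0 < nsq σ := by
  refine (nsq_nonneg σ).lt_of_ne fun h => ?_
  have : disc σ ≤ 0 := by simpa [← h] using disc_le_nsq_sq σ
  linarith

lemma one_sub_xi {σ : Fin N → ℂ} (hn : nsq σ ≠ 0) : 1 - xi σ = disc σ / nsq σ ^ 2 := by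
  rw [xi, zeta, Complex.normSq_div, Complex.normSq_ofReal, Complex.normSq_eq_norm_sq, disc]
  field_simp

lemma disc_pos {σ : Fin N → ℂ} (hn : 0 < nsq σ) (hξ : xi σ < 1) : 0 < disc σ := by
  have := one_sub_xi hn.ne'
  have : 0 < disc σ / nsq σ ^ 2 := by linarith
  exact (div_pos_iff_of_pos_right (by positivity)).1 this

lemma sqrt_one_sub_xi {σ : Fin N → ℂ} (hn : 0 < nsq σ) :
    √(1 - xi σ) = √(disc σ) / nsq σ := by
  rw [one_sub_xi hn.ne', Real.sqrt_div' _ (by positivity), Real.sqrt_sq hn.le]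

lemma Phi_eq (σ : Fin N → ℂ) : Phi σ = (nsq σ + √(disc σ)) / 2 := by
  rcases (nsq_nonneg σ).lt_or_eq with hn | hn
  · rw [Phi, sqrt_one_sub_xi hn]; field_simp
  · have : disc σ ≤ 0 := by simpa [← hn] using disc_le_nsq_sq σ
    rw [Phi, ← hn, Real.sqrt_eq_zero'.2 this]; ring

lemma P_h_eq {σ : Fin N → ℂ} (hD : 0 < disc σ) :
    P h σ = (2 * √(disc σ))⁻¹ • ((nsq σ + √(disc σ)) • σ - B σ σ • conjFun σ) := by
  have hn := nsq_pos_of_disc_pos hD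
  have hs : 0 < √(disc σ) := Real.sqrt_pos.2 hD
  have hn' : (nsq σ : ℂ) ≠ 0 := by exact_mod_cast hn.ne'
  have hns : (nsq σ : ℂ) + √(disc σ) ≠ 0 := by exact_mod_cast (add_pos hn hs).ne'
  have hs' : (√(disc σ) : ℂ) ≠ 0 := by exact_mod_cast hs.ne'
  rw [P, h, sqrt_one_sub_xi hn, zeta]
  ext I
  simp only [Pi.smul_apply, Pi.sub_apply, Complex.real_smul, smul_eq_mul]
  push_cast
  field_simp

lemma hasFDerivAt_disc (σ : Fin N → ℂ) : HasFDerivAt disc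
    ((4 * nsq σ) • reInnerL σ - (4 : ℝ) • (innerSL ℝ (B σ σ)).comp (hInnerL (conjFun σ))) σ := by
  refine (((hasFDerivAt_nsq σ).pow 2).sub (hasFDerivAt_B_self σ).norm_sq).congr_fderiv ?_
  ext u
  simp only [Nat.add_one_sub_one, pow_one, nsmul_eq_mul, Nat.cast_ofNat,
    ContinuousLinearMap.comp_smulₛₗ, Real.ringHom_apply, sub_apply, smul_apply, reInnerL_apply,
    smul_eq_mul, ContinuousLinearMap.comp_apply, hInnerL_apply, coe_innerSL_apply, Complex.inner,
    Complex.mul_re, Complex.conj_re, Complex.conj_im]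
  ring

lemma hasFDerivAt_Phi {σ : Fin N → ℂ} (hD : 0 < disc σ) :
    HasFDerivAt Phi ((2 : ℝ) • reInnerL (P h σ)) σ := by
  have hs : 0 < √(disc σ) := Real.sqrt_pos.2 hD
  have hPhi := ((hasFDerivAt_nsq σ).add ((hasFDerivAt_disc σ).sqrt hD.ne')).mul_const (2⁻¹ : ℝ)
  rw [show Phi = fun τ => (nsq τ + √(disc τ)) * 2⁻¹ from funext fun τ => Phi_eq τ]
  refine hPhi.congr_fderiv ?_
  ext u
  have hP : (hInner (P h σ) u).re = ((nsq σ + √(disc σ)) * (hInner σ u).re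
      - (conj (B σ σ) * B σ u).re) / (2 * √(disc σ)) := by
    rw [P_h_eq hD, isBilinearMap_hInner.smul_left, hInner_sub_left, isBilinearMap_hInner.smul_left,
      hInner_smul_left, hInner_conjFun_left, Complex.smul_re, Complex.sub_re, Complex.smul_re]
    ring
  simp only [one_div, mul_inv_rev, smul_add, add_apply,
    reInnerL_apply, smul_apply, sub_apply, smul_eq_mul, ContinuousLinearMap.comp_apply,
    hInnerL_apply, hInner_conjFun_left, coe_innerSL_apply, Complex.inner, Complex.mul_re,
    Complex.conj_re, Complex.conj_im, hP]
  field_simp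
  ring

lemma eventually_disc_pos {ρ : Fin N → ℂ} (hD : 0 < disc ρ) : ∀ᶠ σ in 𝓝 ρ, 0 < disc σ :=
  (hasFDerivAt_disc ρ).continuousAt.eventually (lt_mem_nhds hD)

lemma differentiableAt_P_h {ρ : Fin N → ℂ} (hD : 0 < disc ρ) : DifferentiableAt ℝ (P h) ρ := by
  have hn : DifferentiableAt ℝ nsq ρ := (hasFDerivAt_nsq ρ).differentiableAt
  have hB : DifferentiableAt ℝ (fun τ => B τ τ) ρ := (hasFDerivAt_B_self ρ).differentiableAt
  have hs : DifferentiableAt ℝ (fun τ => √(disc τ)) ρ :=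
    (hasFDerivAt_disc ρ).differentiableAt.sqrt hD.ne'
  have hs0 : 2 * √(disc ρ) ≠ 0 := by positivity
  have hP : P h =ᶠ[𝓝 ρ]
      fun σ => (2 * √(disc σ))⁻¹ • ((nsq σ + √(disc σ)) • σ - B σ σ • conjFun σ) :=
    (eventually_disc_pos hD).mono fun σ => P_h_eq
  refine DifferentiableAt.congr_of_eventuallyEq ?_ hP
  have hc : DifferentiableAt ℝ conjFun ρ := conjL.differentiableAt
  fun_prop (disch := assumption)

/-- Toy model, Proposition 3 item 1: for `f = h`, the (real) Fréchet derivative of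
`P_h` at `ρ` is self-adjoint with respect to the real inner product `Re⟪·,·⟫`. -/
theorem statement19 {N : ℕ} (ρ : Fin N → ℂ) (hρ : ρ ≠ 0) (hξ : xi ρ < 1) :
    DifferentiableAt ℝ (P h) ρ ∧
      ∀ u v, (hInner (fderiv ℝ (P h) ρ u) v).re
        = (hInner (fderiv ℝ (P h) ρ v) u).re := by
  have hD : 0 < disc ρ := disc_pos (nsq_pos hρ) hξ
  have hP : DifferentiableAt ℝ (P h) ρ := differentiableAt_P_h hD
  refine ⟨hP, fun u v => ?_⟩
  have hgrad : ∀ᶠ σ in 𝓝 ρ, HasFDerivAt Phi (((2 : ℝ) • reInnerL) (P h σ)) σ :=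
    (eventually_disc_pos hD).mono fun σ => hasFDerivAt_Phi
  simpa using bilin_fderiv_symm_of_gradient hgrad hP u v

end PureSpinorToy
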